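/- arXiv:1501.02702 — 7 statements merged into one kernel-verified Lean document; each statement's English description precedes it below -/
import Mathlib

section
/- For non-negative integers a₁ ≤ b₁, …, a_k ≤ b_k and any index j, and any non-negative integer exponents p₁, …, p_k with at least two nonzero, the one-step increment in coordinate j satisfies: ∏ᵢ aᵢ^{pᵢ} evaluated with aⱼ+1 minus ∏ᵢ aᵢ^{pᵢ} is at most ∏ᵢ bᵢ^{pᵢ} with bⱼ+1 minus ∏ᵢ bᵢ^{pᵢ}. That is, (aⱼ+1)^{pⱼ}∏_{i≠j} aᵢ^{pᵢ} - ∏ᵢ aᵢ^{pᵢ} ≤ (bⱼ+1)^{pⱼ}∏_{i≠j} bᵢ^{pᵢ} - ∏ᵢ bᵢ^{pᵢ}. -/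
lemma diff_pow_mono (p : ℕ) {x y : ℤ} (hx : 0 ≤ x) (hxy : x ≤ y) :
    (x + 1) ^ p - x ^ p ≤ (y + 1) ^ p - y ^ p := by
  have hx' : ∀ (z : ℤ), (z + 1) ^ p = (∑ i ∈ Finset.range p, z ^ i * (p.choose i : ℤ)) + z ^ p := by
    intro z
    have := add_pow z 1 p
    simp only [one_pow, mul_one] at this
    rw [this, Finset.sum_range_succ, Nat.choose_self]
    push_cast; ring
  rw [hx' x, hx' y]
  simp only [add_sub_cancel_right]
  refine Finset.sum_le_sum fun i _ => ?_
  exact mul_le_mul_of_nonneg_right (pow_le_pow_left₀ hx hxy i) (by positivity)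

theorem stmt_4 (k : ℕ) (a b p : Fin k → ℕ) (j : Fin k)
    (hab : ∀ i, a i ≤ b i)
    (hp : ∃ i i' : Fin k, i ≠ i' ∧ 0 < p i ∧ 0 < p i') :
    ((a j + 1 : ℤ)) ^ (p j) * ∏ i ∈ Finset.univ.erase j, (a i : ℤ) ^ (p i)
        - ∏ i : Fin k, (a i : ℤ) ^ (p i)
      ≤ ((b j + 1 : ℤ)) ^ (p j) * ∏ i ∈ Finset.univ.erase j, (b i : ℤ) ^ (p i)
        - ∏ i : Fin k, (b i : ℤ) ^ (p i) := by
  have hsplit : ∀ c : Fin k → ℕ,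
      (∏ i : Fin k, (c i : ℤ) ^ (p i))
        = (c j : ℤ) ^ (p j) * ∏ i ∈ Finset.univ.erase j, (c i : ℤ) ^ (p i) := by
    intro c
    exact (Finset.mul_prod_erase Finset.univ (fun i => (c i : ℤ) ^ (p i))
      (Finset.mem_univ j)).symm
  rw [hsplit a, hsplit b, ← sub_mul, ← sub_mul]
  have h1 : ((a j : ℤ) + 1) ^ (p j) - (a j : ℤ) ^ (p j)
      ≤ ((b j : ℤ) + 1) ^ (p j) - (b j : ℤ) ^ (p j) :=
    diff_pow_mono _ (by positivity) (by exact_mod_cast hab j)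
  have h1' : 0 ≤ ((a j : ℤ) + 1) ^ (p j) - (a j : ℤ) ^ (p j) :=
    sub_nonneg.mpr (pow_le_pow_left₀ (by positivity) (by linarith) _)
  have h2 : (∏ i ∈ Finset.univ.erase j, (a i : ℤ) ^ (p i))
      ≤ ∏ i ∈ Finset.univ.erase j, (b i : ℤ) ^ (p i) :=
    Finset.prod_le_prod (fun i _ => by positivity)
      (fun i _ => pow_le_pow_left₀ (by positivity) (by exact_mod_cast hab i) _)
  have h3 : 0 ≤ ∏ i ∈ Finset.univ.erase j, (a i : ℤ) ^ (p i) :=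
    Finset.prod_nonneg fun i _ => by positivity
  push_cast
  exact mul_le_mul h1 h2 h3 (le_trans h1' h1)
end

section
/- The Powers impurity function F(G) = (Σ_{i=1}^k n^i_G)^l − Σ_{i=1}^k (n^i_G)^l is, for every integer l ≥ 2, non-negative, zero exactly when G contains objects of at most one class, monotone, and supermodular. -/
/-- number of objects of class `i` in `G` -/
def classCount {α : Type*} [DecidableEq α] {k : ℕ} (cls : α → Fin k)
    (i : Fin k) (G : Finset α) : ℕ :=
  (G.filter fun x => cls x = i).card

/-- the Powers impurity function -/
noncomputable def powersImp {α : Type*} [DecidableEq α] {k : ℕ} (cls : α → Fin k)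
    (l : ℕ) (G : Finset α) : ℝ :=
  (∑ i : Fin k, (classCount cls i G : ℝ)) ^ l - ∑ i : Fin k, (classCount cls i G : ℝ) ^ l

lemma pow_diff_mono (i a b A B : ℕ) (ha : a ≤ A) (hb : b ≤ B) :
    (a + b) ^ i + A ^ i ≤ (A + B) ^ i + a ^ i := by
  have h1 : (a + b) ^ i = ∑ j ∈ Finset.range i, a ^ j * b ^ (i - j) * i.choose j + a ^ i := by
    rw [add_pow, Finset.sum_range_succ]; simp
  have h2 : (A + B) ^ i = ∑ j ∈ Finset.range i, A ^ j * B ^ (i - j) * i.choose j + A ^ i := by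
    rw [add_pow, Finset.sum_range_succ]; simp
  have hs : ∑ j ∈ Finset.range i, a ^ j * b ^ (i - j) * i.choose j ≤
      ∑ j ∈ Finset.range i, A ^ j * B ^ (i - j) * i.choose j := by
    apply Finset.sum_le_sum; intro j _; gcongr
  omega

lemma key_nat (l a b A B : ℕ) (ha : a ≤ A) (hb : b ≤ B) :
    (a+b+1)^l + a^l + (A+1)^l + (A+B)^l ≤ (A+B+1)^l + A^l + (a+1)^l + (a+b)^l := by
  have exp : ∀ t : ℕ, (t+1)^l = ∑ i ∈ Finset.range l, t ^ i * l.choose i + t ^ l := by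
    intro t; rw [add_pow, Finset.sum_range_succ]; simp
  have hs : (∑ i ∈ Finset.range l, (a+b) ^ i * l.choose i) +
        (∑ i ∈ Finset.range l, A ^ i * l.choose i) ≤
      (∑ i ∈ Finset.range l, (A+B) ^ i * l.choose i) +
        (∑ i ∈ Finset.range l, a ^ i * l.choose i) := by
    rw [← Finset.sum_add_distrib, ← Finset.sum_add_distrib]
    apply Finset.sum_le_sum; intro i _
    have h := pow_diff_mono i a b A B ha hb
    calc (a+b)^i * l.choose i + A^i * l.choose i
        = ((a+b)^i + A^i) * l.choose i := by ring
      _ ≤ ((A+B)^i + a^i) * l.choose i := Nat.mul_le_mul_right _ h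
      _ = (A+B)^i * l.choose i + a^i * l.choose i := by ring
  rw [exp (a+b), exp A, exp (A+B), exp a]
  omega

lemma key_real (l a b A B : ℕ) (ha : a ≤ A) (hb : b ≤ B) :
    ((a:ℝ)+b+1)^l - ((a:ℝ)+b)^l - (((a:ℝ)+1)^l - (a:ℝ)^l) ≤
    ((A:ℝ)+B+1)^l - ((A:ℝ)+B)^l - (((A:ℝ)+1)^l - (A:ℝ)^l) := by
  have h := key_nat l a b A B ha hb
  have h' : ((a+b+1)^l + a^l + (A+1)^l + (A+B)^l : ℝ) ≤
      ((A+B+1)^l + A^l + (a+1)^l + (a+b)^l : ℝ) := by exact_mod_cast h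
  push_cast at h'
  linarith

lemma count_insert' {α : Type*} [DecidableEq α] {k : ℕ} (cls : α → Fin k) (i : Fin k)
    (G : Finset α) (x : α) (hx : x ∉ G) :
    classCount cls i (insert x G) =
      if cls x = i then classCount cls i G + 1 else classCount cls i G := by
  unfold classCount
  rw [Finset.filter_insert]
  split
  · rw [Finset.card_insert_of_notMem (fun h => hx (Finset.mem_filter.1 h).1)]
  · rfl

lemma sum_counts {α : Type*} [DecidableEq α] {k : ℕ} (cls : α → Fin k) (G : Finset α) :
    ∑ i : Fin k, classCount cls i G = G.card := by
  unfold classCount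
  exact (Finset.card_eq_sum_card_fiberwise (fun x _ => Finset.mem_univ (cls x))).symm

lemma imp_insert {α : Type*} [DecidableEq α] {k : ℕ} (cls : α → Fin k) (l : ℕ)
    (G : Finset α) (x : α) (hx : x ∉ G) :
    powersImp cls l (insert x G) - powersImp cls l G =
      (((G.card : ℝ) + 1) ^ l - (G.card : ℝ) ^ l)
      - (((classCount cls (cls x) G : ℝ) + 1) ^ l - (classCount cls (cls x) G : ℝ) ^ l) := by
  unfold powersImp
  set c := cls x with hc
  have h1 : ∑ i : Fin k, (classCount cls i (insert x G) : ℝ) = (G.card : ℝ) + 1 := by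
    have : ∑ i : Fin k, classCount cls i (insert x G) = G.card + 1 := by
      rw [sum_counts, Finset.card_insert_of_notMem hx]
    exact_mod_cast this
  have h0 : ∑ i : Fin k, (classCount cls i G : ℝ) = (G.card : ℝ) := by
    exact_mod_cast congrArg (Nat.cast : ℕ → ℝ) (sum_counts cls G)
  have h2 : ∑ i : Fin k, (classCount cls i (insert x G) : ℝ) ^ l =
      ∑ i : Fin k, ((classCount cls i G : ℝ) ^ l +
        (if c = i then ((classCount cls c G : ℝ) + 1) ^ l - (classCount cls c G : ℝ) ^ l else 0)) := by
    apply Finset.sum_congr rfl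
    intro i _
    rw [count_insert' cls i G x hx, ← hc]
    by_cases h : c = i
    · subst h; simp
    · simp [h]
  rw [h1, h0, h2, Finset.sum_add_distrib, Finset.sum_ite_eq]
  simp
  ring

lemma imp_incr_le {α : Type*} [DecidableEq α] {k : ℕ} (cls : α → Fin k) (l : ℕ)
    (R G : Finset α) (x : α) (hRG : R ⊆ G) (hx : x ∉ G) :
    powersImp cls l (insert x R) - powersImp cls l R ≤
      powersImp cls l (insert x G) - powersImp cls l G := by
  have hxR : x ∉ R := fun h => hx (hRG h)
  rw [imp_insert cls l G x hx, imp_insert cls l R x hxR]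
  set c := cls x
  set a := classCount cls c R with hadef
  set A := classCount cls c G with hAdef
  set b := (R.filter fun y => ¬ cls y = c).card with hbdef
  set B := (G.filter fun y => ¬ cls y = c).card with hBdef
  have hRcard : R.card = a + b := by
    rw [hadef, hbdef]; unfold classCount
    exact (Finset.card_filter_add_card_filter_not (fun y => cls y = c)).symm
  have hGcard : G.card = A + B := by
    rw [hAdef, hBdef]; unfold classCount
    exact (Finset.card_filter_add_card_filter_not (fun y => cls y = c)).symm
  have ha : a ≤ A := Finset.card_le_card (Finset.filter_subset_filter _ hRG)
  have hb : b ≤ B := Finset.card_le_card (Finset.filter_subset_filter _ hRG)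
  have := key_real l a b A B ha hb
  rw [hRcard, hGcard]
  push_cast
  linarith

lemma imp_insert_nonneg_incr {α : Type*} [DecidableEq α] {k : ℕ} (cls : α → Fin k) (l : ℕ)
    (G : Finset α) (x : α) (hx : x ∉ G) :
    powersImp cls l G ≤ powersImp cls l (insert x G) := by
  have h := imp_insert cls l G x hx
  set c := cls x
  set A := classCount cls c G with hAdef
  set B := (G.filter fun y => ¬ cls y = c).card with hBdef
  have hGcard : G.card = A + B := by
    rw [hAdef, hBdef]; unfold classCount
    exact (Finset.card_filter_add_card_filter_not (fun y => cls y = c)).symm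
  have := key_real l A 0 A B le_rfl (Nat.zero_le B)
  rw [hGcard] at h
  push_cast at h this
  norm_num at this
  linarith

lemma imp_mono {α : Type*} [DecidableEq α] {k : ℕ} (cls : α → Fin k) (l : ℕ)
    (R G : Finset α) (hRG : R ⊆ G) : powersImp cls l R ≤ powersImp cls l G := by
  have key : ∀ n (R G : Finset α), R ⊆ G → (G \ R).card = n →
      powersImp cls l R ≤ powersImp cls l G := by
    intro n
    induction n with
    | zero =>
      intro R G hRG h0
      have : G \ R = ∅ := Finset.card_eq_zero.1 h0
      have : G ⊆ R := fun y hy => by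
        by_contra hyR
        exact absurd (Finset.mem_sdiff.2 ⟨hy, hyR⟩) (by simp [this])
      rw [Finset.Subset.antisymm hRG this]
    | succ n ih =>
      intro R G hRG hcard
      have hne : (G \ R).Nonempty := by
        rw [← Finset.card_pos, hcard]; omega
      obtain ⟨y, hy⟩ := hne
      have hyG : y ∈ G := (Finset.mem_sdiff.1 hy).1
      have hyR : y ∉ R := (Finset.mem_sdiff.1 hy).2
      have hsub : insert y R ⊆ G := Finset.insert_subset hyG hRG
      have hstep : powersImp cls l R ≤ powersImp cls l (insert y R) :=
        imp_insert_nonneg_incr cls l R y hyR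
      have hcard' : (G \ insert y R).card = n := by
        have : G \ insert y R = (G \ R).erase y := by
          ext z; simp [Finset.mem_sdiff, Finset.mem_erase]; tauto
        rw [this, Finset.card_erase_of_mem hy, hcard]
        omega
      exact le_trans hstep (ih (insert y R) G hsub hcard')
  exact key (G \ R).card R G hRG rfl

lemma imp_empty {α : Type*} [DecidableEq α] {k : ℕ} (cls : α → Fin k) (l : ℕ) (hl : 2 ≤ l) :
    powersImp cls l ∅ = 0 := by
  unfold powersImp classCount
  simp [zero_pow (by omega : l ≠ 0)]

theorem stmt_6 {α : Type*} [DecidableEq α] (k : ℕ) (cls : α → Fin k)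
    (l : ℕ) (hl : 2 ≤ l) :
    (∀ G : Finset α, 0 ≤ powersImp cls l G) ∧
    (∀ G : Finset α, powersImp cls l G = 0 ↔ ∀ x ∈ G, ∀ y ∈ G, cls x = cls y) ∧
    (∀ R G : Finset α, R ⊆ G → powersImp cls l R ≤ powersImp cls l G) ∧
    (∀ (R G : Finset α) (x : α), R ⊆ G → x ∉ G →
      powersImp cls l (insert x G) - powersImp cls l G ≥
        powersImp cls l (insert x R) - powersImp cls l R) := by
  have hnonneg : ∀ G : Finset α, 0 ≤ powersImp cls l G := by
    intro G
    have := imp_mono cls l ∅ G (Finset.empty_subset G)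
    rwa [imp_empty cls l hl] at this
  refine ⟨hnonneg, ?_, fun R G h => imp_mono cls l R G h,
    fun R G x hRG hx => imp_incr_le cls l R G x hRG hx⟩
  intro G
  constructor
  · -- F G = 0 → monochromatic
    intro h0 x hx y hy
    by_contra hne
    have hxy : x ≠ y := fun h => hne (by rw [h])
    have hsub : {x, y} ⊆ G := by
      intro z hz
      rcases Finset.mem_insert.1 hz with rfl | hz
      · exact hx
      · rw [Finset.mem_singleton.1 hz]; exact hy
    have hxny : x ∉ ({y} : Finset α) := by simp [hxy]
    have hy0 : powersImp cls l {y} = 0 := by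
      have h := imp_insert cls l ∅ y (Finset.notMem_empty y)
      have hc : classCount cls (cls y) ∅ = 0 := by simp [classCount]
      rw [imp_empty cls l hl, hc] at h
      simpa using h
    have hcnt : classCount cls (cls x) {y} = 0 := by
      simp [classCount, Finset.filter_singleton,
        (show ¬ cls y = cls x from fun h => hne h.symm)]
    have hpair : powersImp cls l {x, y} = 2 ^ l - 2 := by
      have h := imp_insert cls l {y} x hxny
      rw [hy0, hcnt] at h
      simp only [Finset.card_singleton, Nat.cast_one, Nat.cast_zero, sub_zero,
        zero_pow (show l ≠ 0 by omega), one_pow] at h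
      rw [show ({x, y} : Finset α) = insert x {y} from rfl, h]
      norm_num
      ring
    have hmono := imp_mono cls l {x, y} G hsub
    have h4 : (4:ℝ) ≤ 2 ^ l := by
      calc (4:ℝ) = 2 ^ 2 := by norm_num
        _ ≤ 2 ^ l := pow_le_pow_right₀ one_le_two hl
    rw [h0, hpair] at hmono
    linarith
  · -- monochromatic → F G = 0
    intro hmono
    rcases G.eq_empty_or_nonempty with rfl | ⟨x₀, hx₀⟩
    · exact imp_empty cls l hl
    have hcnt : ∀ i, classCount cls i G = if i = cls x₀ then G.card else 0 := by
      intro i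
      unfold classCount
      split
      · rename_i h
        congr 1
        apply Finset.filter_true_of_mem
        intro y hy; rw [hmono y hy x₀ hx₀, h]
      · rename_i h
        rw [Finset.filter_false_of_mem, Finset.card_empty]
        intro y hy hcy
        exact h (by rw [← hcy, hmono y hy x₀ hx₀])
    unfold powersImp
    have e1 : ∑ i : Fin k, (classCount cls i G : ℝ) = (G.card : ℝ) := by
      rw [Finset.sum_congr rfl fun i _ => by rw [hcnt i]]
      simp [Finset.sum_ite_eq']
    have e2 : ∑ i : Fin k, (classCount cls i G : ℝ) ^ l = (G.card : ℝ) ^ l := by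
      rw [Finset.sum_congr rfl fun i _ => by rw [hcnt i]]
      have : ∀ i : Fin k, ((if i = cls x₀ then (G.card : ℕ) else 0 : ℕ) : ℝ) ^ l =
          if i = cls x₀ then (G.card : ℝ) ^ l else 0 := by
        intro i; split <;> simp [zero_pow (by omega : l ≠ 0)]
      rw [Finset.sum_congr rfl fun i _ => this i]
      simp [Finset.sum_ite_eq']
    rw [e1, e2, sub_self]
end

section
/- The binary hinged-Pairs function P_α(G) = [[n¹_G − α]₊ · [n²_G − α]₊ − α²]₊ is supermodular: for R ⊆ G and an object j ∉ R, P_α(G ∪ {j}) − P_α(G) ≥ P_α(R ∪ {j}) − P_α(R). -/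
/-- the binary hinged-Pairs impurity function -/
noncomputable def hingedPairs2 {α : Type*} [DecidableEq α] (cls : α → Fin 2)
    (a : ℝ) (G : Finset α) : ℝ :=
  max (max ((classCount cls 0 G : ℝ) - a) 0 * max ((classCount cls 1 G : ℝ) - a) 0 - a ^ 2) 0

private lemma flatten (t q c : ℝ) (hq : 0 ≤ q) (hc : 0 ≤ c) :
    max (max t 0 * q - c) 0 = max (t * q - c) 0 := by
  rcases le_total t 0 with h | h
  · rw [max_eq_right h]
    rw [max_eq_right (by nlinarith), max_eq_right (by nlinarith)]
  · rw [max_eq_left h]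

private lemma flatten2 (t q c : ℝ) (hq : 0 ≤ q) (hc : 0 ≤ c) :
    max (q * max t 0 - c) 0 = max (t * q - c) 0 := by
  rw [mul_comm]; exact flatten t q c hq hc

private lemma Dmono_q (s q q' c : ℝ) (hc : 0 ≤ c) (hq : 0 ≤ q) (hqq : q ≤ q') :
    max ((s+1)*q - c) 0 - max (s*q - c) 0 ≤ max ((s+1)*q' - c) 0 - max (s*q' - c) 0 := by
  rcases le_total ((s+1)*q - c) 0 with h1 | h1 <;>
  rcases le_total (s*q - c) 0 with h2 | h2 <;>
  rcases le_total ((s+1)*q' - c) 0 with h3 | h3 <;>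
  rcases le_total (s*q' - c) 0 with h4 | h4 <;>
  simp only [max_eq_right h1, max_eq_left h1, max_eq_right h2, max_eq_left h2,
    max_eq_right h3, max_eq_left h3, max_eq_right h4, max_eq_left h4] <;>
  nlinarith [mul_nonneg hq (sub_nonneg.mpr hqq)]

private lemma Dmono_s (s t q c : ℝ) (hc : 0 ≤ c) (hq : 0 ≤ q) (hst : s ≤ t) :
    max ((s+1)*q - c) 0 - max (s*q - c) 0 ≤ max ((t+1)*q - c) 0 - max (t*q - c) 0 := by
  rcases le_total ((s+1)*q - c) 0 with h1 | h1 <;>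
  rcases le_total (s*q - c) 0 with h2 | h2 <;>
  rcases le_total ((t+1)*q - c) 0 with h3 | h3 <;>
  rcases le_total (t*q - c) 0 with h4 | h4 <;>
  simp only [max_eq_right h1, max_eq_left h1, max_eq_right h2, max_eq_left h2,
    max_eq_right h3, max_eq_left h3, max_eq_right h4, max_eq_left h4] <;>
  nlinarith [mul_nonneg hq (sub_nonneg.mpr hst)]

private lemma key (s t q q' c : ℝ) (hc : 0 ≤ c) (hq : 0 ≤ q) (hqq : q ≤ q') (hst : s ≤ t) :
    max ((s+1)*q - c) 0 - max (s*q - c) 0 ≤ max ((t+1)*q' - c) 0 - max (t*q' - c) 0 :=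
  le_trans (Dmono_q s q q' c hc hq hqq) (Dmono_s s t q' c hc (hq.trans hqq) hst)

private lemma classCount_insert {α : Type*} [DecidableEq α] {k : ℕ} (cls : α → Fin k)
    (i : Fin k) (j : α) (G : Finset α) (hj : j ∉ G) :
    classCount cls i (insert j G) = classCount cls i G + (if cls j = i then 1 else 0) := by
  unfold classCount
  rw [Finset.filter_insert]
  split
  · rw [Finset.card_insert_of_notMem (fun h => hj (Finset.mem_filter.mp h).1)]
  · simp

private lemma classCount_mono {α : Type*} [DecidableEq α] {k : ℕ} (cls : α → Fin k)
    (i : Fin k) {R G : Finset α} (h : R ⊆ G) :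
    classCount cls i R ≤ classCount cls i G :=
  Finset.card_le_card (Finset.filter_subset_filter _ h)

theorem stmt_8 {α : Type*} [DecidableEq α] (cls : α → Fin 2) (a : ℝ) (ha : 0 ≤ a) :
    ∀ (R G : Finset α) (j : α), R ⊆ G → j ∉ G →
      hingedPairs2 cls a (insert j G) - hingedPairs2 cls a G ≥
        hingedPairs2 cls a (insert j R) - hingedPairs2 cls a R := by
  intro R G j hRG hjG
  have hjR : j ∉ R := fun h => hjG (hRG h)
  have hc : (0:ℝ) ≤ a ^ 2 := sq_nonneg a
  have h1 : classCount cls 0 R ≤ classCount cls 0 G := classCount_mono cls 0 hRG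
  have h2 : classCount cls 1 R ≤ classCount cls 1 G := classCount_mono cls 1 hRG
  have hj01 : cls j = 0 ∨ cls j = 1 := by omega
  unfold hingedPairs2
  rcases hj01 with hj | hj <;>
    rw [classCount_insert cls 0 j G hjG, classCount_insert cls 1 j G hjG,
      classCount_insert cls 0 j R hjR, classCount_insert cls 1 j R hjR, hj] <;>
    simp only [if_pos rfl, if_neg (by decide : ¬ ((0:Fin 2) = 1)),
      if_neg (by decide : ¬ ((1:Fin 2) = 0)), Nat.add_zero]
  · -- cls j = 0 : first coordinate increments
    rw [flatten _ _ _ (le_max_right _ _) hc, flatten _ _ _ (le_max_right _ _) hc,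
        flatten _ _ _ (le_max_right _ _) hc, flatten _ _ _ (le_max_right _ _) hc]
    push_cast
    have := key ((classCount cls 0 R : ℝ) - a) ((classCount cls 0 G : ℝ) - a)
      (max ((classCount cls 1 R : ℝ) - a) 0) (max ((classCount cls 1 G : ℝ) - a) 0)
      (a ^ 2) hc (le_max_right _ _)
      (max_le_max (by exact sub_le_sub_right (by exact_mod_cast h2) a) le_rfl)
      (by exact sub_le_sub_right (by exact_mod_cast h1) a)
    rw [show (classCount cls 0 R : ℝ) - a + 1 = (classCount cls 0 R : ℝ) + 1 - a by ring,
        show (classCount cls 0 G : ℝ) - a + 1 = (classCount cls 0 G : ℝ) + 1 - a by ring] at this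
    linarith [this]
  · -- cls j = 1 : second coordinate increments
    rw [flatten2 _ _ _ (le_max_right _ _) hc, flatten2 _ _ _ (le_max_right _ _) hc,
        flatten2 _ _ _ (le_max_right _ _) hc, flatten2 _ _ _ (le_max_right _ _) hc]
    push_cast
    have := key ((classCount cls 1 R : ℝ) - a) ((classCount cls 1 G : ℝ) - a)
      (max ((classCount cls 0 R : ℝ) - a) 0) (max ((classCount cls 0 G : ℝ) - a) 0)
      (a ^ 2) hc (le_max_right _ _)
      (max_le_max (by exact sub_le_sub_right (by exact_mod_cast h1) a) le_rfl)
      (by exact sub_le_sub_right (by exact_mod_cast h2) a)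
    rw [show (classCount cls 1 R : ℝ) - a + 1 = (classCount cls 1 R : ℝ) + 1 - a by ring,
        show (classCount cls 1 G : ℝ) - a + 1 = (classCount cls 1 G : ℝ) + 1 - a by ring] at this
    linarith [this]
end

section
/- In a leaf L with class counts n^1_L, …, n^k_L (total n_L) whose hinged-Pairs impurity is zero with parameter α = εn, every non-majority class i satisfies n^i_L ≤ k·ε·n. Consequently the fraction of non-majority objects in L is at most k(k−1)ε of n. -/
lemma card_eq_sum_classCount {α : Type*} [DecidableEq α] {k : ℕ} (cls : α → Fin k)
    (L : Finset α) : L.card = ∑ i : Fin k, classCount cls i L :=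
  Finset.card_eq_sum_card_fiberwise (fun x _ => Finset.mem_univ (cls x))

theorem stmt_11 {α : Type*} [DecidableEq α] (k : ℕ) (cls : α → Fin k)
    (L : Finset α) (n : ℕ) (ε : ℝ) (hε : 0 ≤ ε) (j : Fin k)
    (hmaj : ∀ i : Fin k, classCount cls i L ≤ classCount cls j L)
    (hzero : ∀ i : Fin k, i ≠ j →
      max (max ((classCount cls i L : ℝ) - ε * n) 0 *
            max ((classCount cls j L : ℝ) - ε * n) 0 - (ε * n) ^ 2) 0 = 0) :
    (∀ i : Fin k, i ≠ j → (classCount cls i L : ℝ) ≤ k * ε * n) ∧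
    ((L.card : ℝ) - (classCount cls j L : ℝ) ≤ k * (k - 1) * ε * n) := by
  have hk : 1 ≤ k := Nat.one_le_iff_ne_zero.mpr (fun h => (h ▸ j).elim0)
  have hk' : (1 : ℝ) ≤ k := by exact_mod_cast hk
  have ha : 0 ≤ ε * n := mul_nonneg hε (Nat.cast_nonneg n)
  have hcard : L.card = ∑ i : Fin k, classCount cls i L := card_eq_sum_classCount cls L
  have hck : (L.card : ℝ) ≤ k * (classCount cls j L : ℝ) := by
    have : L.card ≤ k * classCount cls j L := by
      rw [hcard]
      calc ∑ i : Fin k, classCount cls i L ≤ ∑ _i : Fin k, classCount cls j L :=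
            Finset.sum_le_sum (fun i _ => hmaj i)
        _ = k * classCount cls j L := by simp [mul_comm]
    exact_mod_cast this
  have hpart1 : ∀ i : Fin k, i ≠ j → (classCount cls i L : ℝ) ≤ k * ε * n := by
    intro i hij
    have hxy : (classCount cls i L : ℝ) ≤ (classCount cls j L : ℝ) :=
      Nat.cast_le.mpr (hmaj i)
    have hx0 : (0 : ℝ) ≤ (classCount cls i L : ℝ) := Nat.cast_nonneg _
    have hsum : (classCount cls i L : ℝ) + (classCount cls j L : ℝ) ≤ (L.card : ℝ) := by
      have : classCount cls i L + classCount cls j L ≤ L.card := by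
        rw [hcard]
        calc classCount cls i L + classCount cls j L
            = ∑ l ∈ ({i, j} : Finset (Fin k)), classCount cls l L := by
              rw [Finset.sum_pair hij]
          _ ≤ ∑ l : Fin k, classCount cls l L :=
              Finset.sum_le_sum_of_subset (Finset.subset_univ _)
      exact_mod_cast this
    rcases le_or_gt ((classCount cls i L : ℝ)) (ε * n) with h | h
    · calc (classCount cls i L : ℝ) ≤ ε * n := h
        _ = 1 * (ε * n) := (one_mul _).symm
        _ ≤ k * (ε * n) := mul_le_mul_of_nonneg_right hk' ha
        _ = k * ε * n := by ring
    · have hya : ε * n < (classCount cls j L : ℝ) := lt_of_lt_of_le h hxy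
      have hz := hzero i hij
      rw [max_eq_right_iff] at hz
      rw [max_eq_left (le_of_lt (sub_pos.mpr h)), max_eq_left (le_of_lt (sub_pos.mpr hya))] at hz
      have hprod : ((classCount cls i L : ℝ) - ε * n) * ((classCount cls j L : ℝ) - ε * n)
          ≤ (ε * n) ^ 2 := by linarith
      nlinarith [mul_nonneg hx0 (sub_nonneg.mpr hck),
        mul_nonneg ha (sub_nonneg.mpr hsum),
        mul_nonneg (le_of_lt (lt_of_le_of_lt ha h)) (sub_nonneg.mpr hck)]
  refine ⟨hpart1, ?_⟩
  have hdiff : (L.card : ℝ) - (classCount cls j L : ℝ)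
      = ∑ i ∈ Finset.univ.erase j, (classCount cls i L : ℝ) := by
    have : (L.card : ℝ) = ∑ i : Fin k, (classCount cls i L : ℝ) := by
      rw [hcard]; push_cast; ring
    rw [this, ← Finset.add_sum_erase Finset.univ _ (Finset.mem_univ j)]
    ring
  rw [hdiff]
  have hcard_erase : ((Finset.univ.erase j).card : ℝ) = (k : ℝ) - 1 := by
    rw [Finset.card_erase_of_mem (Finset.mem_univ j)]
    simp only [Finset.card_univ, Fintype.card_fin]
    rw [Nat.cast_sub hk]
    simp
  calc ∑ i ∈ Finset.univ.erase j, (classCount cls i L : ℝ)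
      ≤ ∑ _i ∈ Finset.univ.erase j, ((k : ℝ) * ε * n) :=
        Finset.sum_le_sum (fun i hi => hpart1 i (Finset.ne_of_mem_erase hi))
    _ = ((Finset.univ.erase j).card : ℝ) * ((k : ℝ) * ε * n) := by
        rw [Finset.sum_const, nsmul_eq_mul]
    _ = ((k : ℝ) - 1) * ((k : ℝ) * ε * n) := by rw [hcard_erase]
    _ = k * (k - 1) * ε * n := by ring
end

section
/- Let a decision tree have l leaves with zero hinged-Pairs impurity at parameter α = εn, partitioning n objects with k classes. Then the classification error (fraction of objects not in the majority class of their leaf) is at most k(k−1)·l·ε. -/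
theorem stmt_13 {α : Type*} [DecidableEq α] (k l n : ℕ) (hk : 0 < k)
    (cls : α → Fin k) (leaf : Fin l → Finset α)
    (hdisj : ∀ s t : Fin l, s ≠ t → Disjoint (leaf s) (leaf t))
    (hn : ∑ t : Fin l, (leaf t).card = n) (hn0 : 0 < n)
    (ε : ℝ) (hε : 0 ≤ ε)
    (hzero : ∀ t : Fin l, ∀ i j : Fin k, i ≠ j →
      max (max ((classCount cls i (leaf t) : ℝ) - ε * n) 0 *
            max ((classCount cls j (leaf t) : ℝ) - ε * n) 0 - (ε * n) ^ 2) 0 = 0) :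
    (∑ t : Fin l, ((leaf t).card - Finset.univ.sup fun i => classCount cls i (leaf t)) : ℝ) / n
      ≤ k * (k - 1) * l * ε := by
  have hn' : (0:ℝ) < n := by exact_mod_cast hn0
  rw [div_le_iff₀ hn']
  set a : ℝ := ε * n with ha
  have ha0 : 0 ≤ a := mul_nonneg hε hn'.le
  have hk1 : (1:ℝ) ≤ k := by exact_mod_cast hk
  have key : ∀ t : Fin l,
      (((leaf t).card : ℝ) - (Finset.univ.sup fun i => classCount cls i (leaf t) : ℕ))
        ≤ (k*(k-1)) * a := by
    intro t
    haveI : Nonempty (Fin k) := ⟨⟨0, hk⟩⟩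
    obtain ⟨imax, -, hmax⟩ := Finset.exists_mem_eq_sup (Finset.univ : Finset (Fin k))
      Finset.univ_nonempty (fun i => classCount cls i (leaf t))
    have hsum : (leaf t).card = ∑ i : Fin k, classCount cls i (leaf t) :=
      Finset.card_eq_sum_card_fiberwise (fun x _ => Finset.mem_univ (cls x))
    have hbound : ∀ j ∈ Finset.univ.erase imax,
        (classCount cls j (leaf t) : ℝ) ≤ 2 * a := by
      intro j hj
      have hj' : j ≠ imax := (Finset.mem_erase.mp hj).1
      by_contra h
      push_neg at h
      have hle : (classCount cls j (leaf t) : ℝ) ≤ classCount cls imax (leaf t) := by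
        have h' : classCount cls j (leaf t) ≤
            Finset.univ.sup fun i => classCount cls i (leaf t) := by
          exact Finset.le_sup (f := fun i => classCount cls i (leaf t)) (Finset.mem_univ j)
        rw [hmax] at h'
        exact_mod_cast h'
      have hC := hzero t imax j (fun e => hj' e.symm)
      have hCle : max ((classCount cls imax (leaf t) : ℝ) - a) 0 *
          max ((classCount cls j (leaf t) : ℝ) - a) 0 - a ^ 2 ≤ 0 :=
        max_eq_right_iff.mp hC
      have h1 : max ((classCount cls j (leaf t) : ℝ) - a) 0
          = (classCount cls j (leaf t) : ℝ) - a := by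
        apply max_eq_left; nlinarith
      have h2 : max ((classCount cls imax (leaf t) : ℝ) - a) 0
          = (classCount cls imax (leaf t) : ℝ) - a := by
        apply max_eq_left; nlinarith
      rw [h1, h2] at hCle
      nlinarith
    have hsum2 : ∑ j ∈ Finset.univ.erase imax, (classCount cls j (leaf t) : ℝ)
        ≤ (Finset.univ.erase imax).card * (2 * a) := by
      calc ∑ j ∈ Finset.univ.erase imax, (classCount cls j (leaf t) : ℝ)
          ≤ ∑ _j ∈ Finset.univ.erase imax, (2*a) := Finset.sum_le_sum hbound
        _ = (Finset.univ.erase imax).card * (2 * a) := by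
            rw [Finset.sum_const, nsmul_eq_mul]
    have hcard : ((Finset.univ.erase imax).card : ℝ) = (k : ℝ) - 1 := by
      rw [Finset.card_erase_of_mem (Finset.mem_univ _), Finset.card_univ,
        Fintype.card_fin, Nat.cast_sub hk, Nat.cast_one]
    have hdecomp : ((leaf t).card : ℝ)
        - (Finset.univ.sup fun i => classCount cls i (leaf t) : ℕ)
        = ∑ j ∈ Finset.univ.erase imax, (classCount cls j (leaf t) : ℝ) := by
      rw [hmax, hsum]
      push_cast
      rw [← Finset.add_sum_erase _ _ (Finset.mem_univ imax)]
      ring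
    rw [hdecomp]
    rw [hcard] at hsum2
    have hstep : ((k:ℝ) - 1) * (2 * a) ≤ (k*(k-1)) * a := by
      rcases Nat.lt_or_ge k 2 with h2 | h2
      · have hk1' : k = 1 := by omega
        subst hk1'; norm_num
      · have h2' : (2:ℝ) ≤ k := by exact_mod_cast h2
        nlinarith [mul_nonneg (mul_nonneg (sub_nonneg.2 hk1) (sub_nonneg.2 h2')) ha0]
    exact hsum2.trans hstep
  calc (∑ t : Fin l, (((leaf t).card : ℝ)
          - (Finset.univ.sup fun i => classCount cls i (leaf t) : ℕ)))
      ≤ ∑ _t : Fin l, (k*(k-1)) * a := Finset.sum_le_sum (fun t _ => key t)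
    _ = l * ((k*(k-1)) * a) := by rw [Finset.sum_const, nsmul_eq_mul]; simp
    _ = k * (k - 1) * l * ε * n := by rw [ha]; ring
end

section
/- Let T be a tree with l leaves all having zero hinged-Pairs impurity at α = εn. For η ∈ [0,1], let l_η be the smallest integer such that the largest l_η leaves contain more than (1−η)n objects. Then the classification error of T is at most k(k−1)·l_η·ε + ((k−1)/k)·η. -/
lemma leaf_card_eq {α : Type*} [DecidableEq α] {k : ℕ} (cls : α → Fin k) (G : Finset α) :
    G.card = ∑ i : Fin k, classCount cls i G :=
  Finset.card_eq_sum_card_fiberwise (fun x _ => Finset.mem_univ (cls x))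

/-- bound for leaves with zero impurity -/
lemma per_leaf_A {α : Type*} [DecidableEq α] {k : ℕ} (hk : 0 < k) (cls : α → Fin k)
    (G : Finset α) (c : ℝ) (hc : 0 ≤ c)
    (hz : ∀ i j : Fin k, i ≠ j →
      max ((classCount cls i G : ℝ) - c) 0 * max ((classCount cls j G : ℝ) - c) 0 ≤ c ^ 2) :
    (G.card : ℝ) - ((Finset.univ.sup fun i => classCount cls i G : ℕ) : ℝ)
      ≤ (k : ℝ) * (k - 1) * c := by
  obtain ⟨i₁, -, hi₁⟩ := Finset.exists_mem_eq_sup Finset.univ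
    ⟨⟨0, hk⟩, Finset.mem_univ _⟩ (fun i => classCount cls i G)
  have hbound : ∀ i : Fin k, i ∈ Finset.univ.erase i₁ → (classCount cls i G : ℝ) ≤ 2 * c := by
    intro i hi
    have hii : i ≠ i₁ := (Finset.mem_erase.mp hi).1
    by_contra h
    push_neg at h
    have h1 : (classCount cls i G : ℝ) ≤ (classCount cls i₁ G : ℝ) := by
      exact_mod_cast hi₁ ▸ Finset.le_sup (f := fun i => classCount cls i G)
        (Finset.mem_univ i)
    have hz' := hz i i₁ hii
    have hxi : c < max ((classCount cls i G : ℝ) - c) 0 := by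
      rw [max_eq_left (by linarith)]; linarith
    have hxj : c < max ((classCount cls i₁ G : ℝ) - c) 0 := by
      rw [max_eq_left (by linarith)]; linarith
    nlinarith
  have hsum : (G.card : ℝ) = ∑ i : Fin k, (classCount cls i G : ℝ) := by
    exact_mod_cast leaf_card_eq cls G
  have hsplit : ∑ i : Fin k, (classCount cls i G : ℝ)
      = (classCount cls i₁ G : ℝ) + ∑ i ∈ Finset.univ.erase i₁, (classCount cls i G : ℝ) :=
    (Finset.add_sum_erase _ _ (Finset.mem_univ i₁)).symm
  have hcard : ((Finset.univ.erase i₁).card : ℝ) = (k : ℝ) - 1 := by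
    rw [Finset.card_erase_of_mem (Finset.mem_univ i₁)]
    simp [Finset.card_univ]
    have : (1 : ℕ) ≤ k := hk
    push_cast [Nat.cast_sub this]
    ring
  have hsle : ∑ i ∈ Finset.univ.erase i₁, (classCount cls i G : ℝ)
      ≤ ((Finset.univ.erase i₁).card : ℝ) * (2 * c) := by
    calc ∑ i ∈ Finset.univ.erase i₁, (classCount cls i G : ℝ)
        ≤ ∑ _i ∈ Finset.univ.erase i₁, (2 * c) := Finset.sum_le_sum hbound
      _ = ((Finset.univ.erase i₁).card : ℝ) * (2 * c) := by
          rw [Finset.sum_const, nsmul_eq_mul]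
  have hk1 : (1 : ℝ) ≤ (k : ℝ) := by exact_mod_cast hk
  have hm : ((Finset.univ.sup fun i => classCount cls i G : ℕ) : ℝ)
      = (classCount cls i₁ G : ℝ) := by exact_mod_cast hi₁
  rw [hm, hsum, hsplit]
  rw [hcard] at hsle
  have hk2 : (k : ℝ) = 1 ∨ (2 : ℝ) ≤ (k : ℝ) := by
    rcases Nat.lt_or_ge k 2 with h | h
    · left; have : k = 1 := by omega
      rw [this]; norm_num
    · right; exact_mod_cast h
  rcases hk2 with h | h
  · rw [h] at hsle ⊢; nlinarith
  · nlinarith [mul_nonneg (mul_nonneg (by linarith : (0:ℝ) ≤ (k:ℝ)-1) (by linarith : (0:ℝ) ≤ (k:ℝ)-2)) hc]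

/-- bound valid for any leaf: majority class has at least a 1/k fraction -/
lemma per_leaf_B {α : Type*} [DecidableEq α] {k : ℕ} (hk : 0 < k) (cls : α → Fin k)
    (G : Finset α) :
    (G.card : ℝ) - ((Finset.univ.sup fun i => classCount cls i G : ℕ) : ℝ)
      ≤ ((k : ℝ) - 1) / k * G.card := by
  have hk0 : (0 : ℝ) < (k : ℝ) := by exact_mod_cast hk
  set m : ℕ := Finset.univ.sup fun i => classCount cls i G with hm
  have hle : (G.card : ℝ) ≤ (k : ℝ) * m := by
    have : G.card ≤ k * m := by
      rw [leaf_card_eq cls G]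
      calc ∑ i : Fin k, classCount cls i G ≤ ∑ _i : Fin k, m :=
            Finset.sum_le_sum fun i _ => hm ▸ Finset.le_sup
              (f := fun i => classCount cls i G) (Finset.mem_univ i)
        _ = k * m := by simp [Finset.sum_const, Finset.card_univ, mul_comm]
    exact_mod_cast this
  have : (G.card : ℝ) / k ≤ (m : ℝ) := by
    rw [div_le_iff₀ hk0]; nlinarith
  have heq : ((k : ℝ) - 1) / k * G.card = (G.card : ℝ) - (G.card : ℝ) / k := by
    field_simp
  rw [heq]; linarith

theorem stmt_14 {α : Type*} [DecidableEq α] (k l n : ℕ) (hk : 0 < k)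
    (cls : α → Fin k) (leaf : Fin l → Finset α)
    (hdisj : ∀ s t : Fin l, s ≠ t → Disjoint (leaf s) (leaf t))
    (hn : ∑ t : Fin l, (leaf t).card = n) (hn0 : 0 < n)
    (ε : ℝ) (hε : 0 ≤ ε) (η : ℝ) (hη : η ∈ Set.Icc (0 : ℝ) 1)
    (hzero : ∀ t : Fin l, ∀ i j : Fin k, i ≠ j →
      max (max ((classCount cls i (leaf t) : ℝ) - ε * n) 0 *
            max ((classCount cls j (leaf t) : ℝ) - ε * n) 0 - (ε * n) ^ 2) 0 = 0)
    (A : Finset (Fin l))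
    (hA : (1 - η) * n ≤ ∑ t ∈ A, ((leaf t).card : ℝ)) :
    (∑ t : Fin l, ((leaf t).card - Finset.univ.sup fun i => classCount cls i (leaf t)) : ℝ) / n
      ≤ k * (k - 1) * A.card * ε + ((k - 1 : ℝ) / k) * η := by
  have hn0' : (0 : ℝ) < n := by exact_mod_cast hn0
  set c : ℝ := ε * n with hc
  have hc0 : 0 ≤ c := mul_nonneg hε (le_of_lt hn0')
  set f : Fin l → ℝ :=
    fun t => ((leaf t).card : ℝ) - ((Finset.univ.sup fun i => classCount cls i (leaf t) : ℕ) : ℝ)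
    with hf
  -- zero impurity gives the product bound
  have hz' : ∀ t : Fin l, ∀ i j : Fin k, i ≠ j →
      max ((classCount cls i (leaf t) : ℝ) - c) 0 *
        max ((classCount cls j (leaf t) : ℝ) - c) 0 ≤ c ^ 2 := by
    intro t i j hij
    have := hzero t i j hij
    have h2 := max_eq_right_iff.mp this
    linarith
  have hbA : ∀ t ∈ A, f t ≤ (k : ℝ) * ((k : ℝ) - 1) * c := fun t _ =>
    per_leaf_A hk cls (leaf t) c hc0 (hz' t)
  have hbB : ∀ t : Fin l, f t ≤ ((k : ℝ) - 1) / k * (leaf t).card := fun t =>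
    per_leaf_B hk cls (leaf t)
  have hsplit : ∑ t ∈ A, f t + ∑ t ∈ Aᶜ, f t = ∑ t : Fin l, f t :=
    Finset.sum_add_sum_compl A f
  have hsumA : ∑ t ∈ A, f t ≤ (A.card : ℝ) * ((k : ℝ) * ((k : ℝ) - 1) * c) := by
    calc ∑ t ∈ A, f t ≤ ∑ _t ∈ A, (k : ℝ) * ((k : ℝ) - 1) * c := Finset.sum_le_sum hbA
      _ = (A.card : ℝ) * ((k : ℝ) * ((k : ℝ) - 1) * c) := by
          rw [Finset.sum_const, nsmul_eq_mul]
  have hcardsum : ∑ t ∈ A, ((leaf t).card : ℝ) + ∑ t ∈ Aᶜ, ((leaf t).card : ℝ) = (n : ℝ) := by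
    rw [Finset.sum_add_sum_compl A fun t => ((leaf t).card : ℝ)]
    exact_mod_cast hn
  have hcompl : ∑ t ∈ Aᶜ, ((leaf t).card : ℝ) ≤ η * n := by nlinarith
  have hk0 : (0 : ℝ) < (k : ℝ) := by exact_mod_cast hk
  have hk1 : (0 : ℝ) ≤ ((k : ℝ) - 1) / k := by
    apply div_nonneg _ (le_of_lt hk0)
    have : (1 : ℝ) ≤ (k : ℝ) := by exact_mod_cast hk
    linarith
  have hsumB : ∑ t ∈ Aᶜ, f t ≤ ((k : ℝ) - 1) / k * (η * n) := by
    calc ∑ t ∈ Aᶜ, f t ≤ ∑ t ∈ Aᶜ, ((k : ℝ) - 1) / k * (leaf t).card :=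
          Finset.sum_le_sum fun t _ => hbB t
      _ = ((k : ℝ) - 1) / k * ∑ t ∈ Aᶜ, ((leaf t).card : ℝ) := by rw [Finset.mul_sum]
      _ ≤ ((k : ℝ) - 1) / k * (η * n) := by
          exact mul_le_mul_of_nonneg_left hcompl hk1
  have htotal : ∑ t : Fin l, f t
      ≤ (A.card : ℝ) * ((k : ℝ) * ((k : ℝ) - 1) * c) + ((k : ℝ) - 1) / k * (η * n) := by
    rw [← hsplit]; linarith
  rw [div_le_iff₀ hn0']
  calc (∑ t : Fin l, f t)
      ≤ (A.card : ℝ) * ((k : ℝ) * ((k : ℝ) - 1) * c) + ((k : ℝ) - 1) / k * (η * n) := htotal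
    _ = ((k : ℝ) * ((k : ℝ) - 1) * A.card * ε + ((k : ℝ) - 1) / k * η) * n := by
        rw [hc]; ring
end

section
/- If a decision tree has classification error at most ε on a set S of n objects with k classes, then every leaf L of the tree satisfies P_{εn}(L) = 0, i.e., for all classes p ≠ q, [[n^p_L − εn]₊[n^q_L − εn]₊ − (εn)²]₊ = 0. -/
lemma classCount_add_le {α : Type*} [DecidableEq α] {k : ℕ} (cls : α → Fin k)
    {i j : Fin k} (hij : i ≠ j) (G : Finset α) :
    classCount cls i G + classCount cls j G ≤ G.card := by
  have hdisj : Disjoint (G.filter fun x => cls x = i) (G.filter fun x => cls x = j) := by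
    rw [Finset.disjoint_left]
    intro x hx hx'
    simp only [Finset.mem_filter] at hx hx'
    exact hij (hx.2 ▸ hx'.2 ▸ rfl)
  calc classCount cls i G + classCount cls j G
      = ((G.filter fun x => cls x = i) ∪ (G.filter fun x => cls x = j)).card := by
        rw [Finset.card_union_of_disjoint hdisj]; rfl
    _ ≤ G.card := Finset.card_le_card (by
        apply Finset.union_subset <;> exact Finset.filter_subset _ _)

theorem stmt_15 {α : Type*} [DecidableEq α] (k l n : ℕ) (hk : 0 < k)
    (cls : α → Fin k) (leaf : Fin l → Finset α)
    (hdisj : ∀ s t : Fin l, s ≠ t → Disjoint (leaf s) (leaf t))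
    (hn : ∑ t : Fin l, (leaf t).card = n)
    (ε : ℝ) (hε : 0 ≤ ε)
    (herr : (∑ t : Fin l,
        ((leaf t).card - Finset.univ.sup fun i => classCount cls i (leaf t)) : ℝ) ≤ ε * n) :
    ∀ t : Fin l, ∀ p q : Fin k, p ≠ q →
      max (max ((classCount cls p (leaf t) : ℝ) - ε * n) 0 *
            max ((classCount cls q (leaf t) : ℝ) - ε * n) 0 - (ε * n) ^ 2) 0 = 0 := by
  intro t p q hpq
  -- each term of the error sum is nonneg
  have hterm_nonneg : ∀ s : Fin l,
      (0 : ℝ) ≤ ((leaf s).card - Finset.univ.sup fun i => classCount cls i (leaf s)) := by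
    intro s
    have hsup : (Finset.univ.sup fun i => classCount cls i (leaf s)) ≤ (leaf s).card :=
      Finset.sup_le fun i _ => Finset.card_le_card (Finset.filter_subset _ _)
    have := (Nat.cast_le (α := ℝ)).mpr hsup
    linarith
  have hle : ((leaf t).card - Finset.univ.sup fun i => classCount cls i (leaf t) : ℝ) ≤ ε * n := by
    calc ((leaf t).card - Finset.univ.sup fun i => classCount cls i (leaf t) : ℝ)
        ≤ ∑ s : Fin l,
          ((leaf s).card - Finset.univ.sup fun i => classCount cls i (leaf s) : ℝ) :=
          Finset.single_le_sum (fun s _ => hterm_nonneg s) (Finset.mem_univ t)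
      _ ≤ ε * n := herr
  -- min of the two counts ≤ card - sup
  have hne : (Finset.univ : Finset (Fin k)).Nonempty := Finset.univ_nonempty_iff.mpr
    (Fin.pos_iff_nonempty.mp hk)
  obtain ⟨r, -, hr⟩ := Finset.exists_mem_eq_sup Finset.univ hne
    (fun i => classCount cls i (leaf t))
  have hmin : min (classCount cls p (leaf t)) (classCount cls q (leaf t)) +
      (Finset.univ.sup fun i => classCount cls i (leaf t)) ≤ (leaf t).card := by
    rw [hr]
    rcases eq_or_ne r p with h | h
    · subst h
      calc min (classCount cls r (leaf t)) (classCount cls q (leaf t)) + classCount cls r (leaf t)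
          ≤ classCount cls q (leaf t) + classCount cls r (leaf t) := by
            gcongr; exact min_le_right _ _
        _ ≤ (leaf t).card := classCount_add_le cls (Ne.symm hpq) _
    · calc min (classCount cls p (leaf t)) (classCount cls q (leaf t)) + classCount cls r (leaf t)
          ≤ classCount cls p (leaf t) + classCount cls r (leaf t) := by
            gcongr; exact min_le_left _ _
        _ ≤ (leaf t).card := classCount_add_le cls (Ne.symm h) _
  -- hence min ≤ ε n
  have hminR : (min (classCount cls p (leaf t)) (classCount cls q (leaf t)) : ℝ) ≤ ε * n := by
    have := (Nat.cast_le (α := ℝ)).mpr hmin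
    push_cast at this
    linarith
  -- conclude
  have key : max ((classCount cls p (leaf t) : ℝ) - ε * n) 0 = 0 ∨
      max ((classCount cls q (leaf t) : ℝ) - ε * n) 0 = 0 := by
    rcases min_cases ((classCount cls p (leaf t) : ℝ)) ((classCount cls q (leaf t) : ℝ)) with ⟨h1, -⟩ | ⟨h1, -⟩
    · left
      rw [h1] at hminR
      exact max_eq_right (by linarith)
    · right
      rw [h1] at hminR
      exact max_eq_right (by linarith)
  have hsq : (0 : ℝ) ≤ (ε * n) ^ 2 := sq_nonneg _
  rcases key with h | h <;> rw [h] <;> [rw [zero_mul]; rw [mul_zero]] <;>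
    exact max_eq_right (by linarith)
end
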